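/- arXiv:2002.11364 — 3 statements merged into one kernel-verified Lean document; each statement's English description precedes it below -/
import Mathlib

section
/- Let f : ℝ^d → ℝ be convex and differentiable with L-Lipschitz continuous gradient and minimizer x*, let ω ≥ 0, and let 0 < η with L η (1+ω) < 2. For the one-step CGD update x^{k+1} = x^k − η C(∇f(x^k)) with C an ω-compression operator, it holds that E[ (η(1+ω)/(1 − Lη(1+ω)/2)) (f(x^{k+1}) − f(x*)) + ‖x^{k+1} − x*‖² ] + 2η (f(x^k) − f(x*)) ≤ (η(1+ω)/(1 − Lη(1+ω)/2)) (f(x^k) − f(x*)) + ‖x^k − x*‖², where the expectation is over the randomness of C. -/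
/-!
Write `g = ∇f(xᵏ)` and `A = η(1+ω)/(1 - Lη(1+ω)/2)`. Smoothness (the descent lemma) bounds
`f(xᵏ⁺¹)` by `f(xᵏ) - η⟪g, C g⟫ + (Lη²/2)‖C g‖²`, and expanding the square gives
`‖xᵏ⁺¹ - x*‖² = ‖xᵏ - x*‖² - 2η⟪xᵏ - x*, C g⟫ + η²‖C g‖²`. In expectation, unbiasedness replaces
`C g` by `g` in the linear terms and `E‖C g‖² ≤ (1+ω)‖g‖²`. Convexity gives
`f(xᵏ) - f(x*) ≤ ⟪xᵏ - x*, g⟫`, which absorbs the term `2η(f(xᵏ) - f(x*))`, and `A` is exactly the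
weight for which the second-moment cost `(ALη²/2 + η²) E‖C g‖²` is paid for by the decrease
`Aη‖g‖²`. The convexity minorant and the smoothness majorant, both integrable, also make
`f(xᵏ⁺¹)` integrable.
-/

open MeasureTheory RealInnerProductSpace

section Smooth

variable {E : Type*} [NormedAddCommGroup E] [InnerProductSpace ℝ E] [CompleteSpace E]
  {f : E → ℝ}

lemma hasDerivAt_comp_add_smul_of_differentiableAt {x v : E} {t : ℝ}
    (hf : DifferentiableAt ℝ f (x + t • v)) :
    HasDerivAt (fun s : ℝ => f (x + s • v)) ⟪gradient f (x + t • v), v⟫ t := by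
  have hline : HasDerivAt (fun s : ℝ => x + s • v) v t := by
    simpa using ((hasDerivAt_id t).smul_const v).const_add x
  exact (hasGradientAt_iff_hasFDerivAt.mp hf.hasGradientAt).comp_hasDerivAt t hline

lemma ConvexOn.add_inner_gradient_le (hconv : ConvexOn ℝ Set.univ f) {x : E}
    (hf : DifferentiableAt ℝ f x) (y : E) :
    f x + ⟪gradient f x, y - x⟫ ≤ f y := by
  have hline : ConvexOn ℝ Set.univ (fun s : ℝ => f (x + s • (y - x))) := by
    simpa [Function.comp_def, AffineMap.lineMap_apply, add_comm] using
      hconv.comp_affineMap (AffineMap.lineMap x y : ℝ →ᵃ[ℝ] E)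
  have hderiv := hasDerivAt_comp_add_smul_of_differentiableAt (v := y - x) (t := 0)
    (by rwa [zero_smul, add_zero])
  rw [zero_smul, add_zero] at hderiv
  have := hline.le_slope_of_hasDerivAt (Set.mem_univ 0) (Set.mem_univ 1) one_pos hderiv
  simp only [slope_def_field, zero_smul, add_zero, one_smul, add_sub_cancel, sub_zero,
    div_one] at this
  linarith

lemma le_add_inner_gradient_add_of_lipschitz_gradient (hf : Differentiable ℝ f) {L : ℝ}
    (hlip : ∀ x y, ‖gradient f x - gradient f y‖ ≤ L * ‖x - y‖) (x y : E) :
    f y ≤ f x + ⟪gradient f x, y - x⟫ + L / 2 * ‖y - x‖ ^ 2 := by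
  obtain ⟨v, rfl⟩ : ∃ v, y = x + v := ⟨y - x, by abel⟩
  rw [add_sub_cancel_left]
  set φ : ℝ → ℝ := fun s => f (x + s • v) - s * ⟪gradient f x, v⟫ - L / 2 * s ^ 2 * ‖v‖ ^ 2
  have hφ : ∀ t, HasDerivAt φ
      (⟪gradient f (x + t • v), v⟫ - ⟪gradient f x, v⟫ - L * t * ‖v‖ ^ 2) t := by
    intro t
    have h := ((hasDerivAt_comp_add_smul_of_differentiableAt (x := x) (v := v) (hf _)).sub
      ((hasDerivAt_id t).mul_const ⟪gradient f x, v⟫)).sub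
      (((hasDerivAt_pow 2 t).const_mul (L / 2)).mul_const (‖v‖ ^ 2))
    exact h.congr_deriv (by push_cast; ring)
  have hanti : AntitoneOn φ (Set.Icc 0 1) := by
    refine antitoneOn_of_hasDerivWithinAt_nonpos (convex_Icc 0 1)
      (fun t _ => (hφ t).continuousAt.continuousWithinAt)
      (fun t _ => (hφ t).hasDerivWithinAt) fun t ht => ?_
    rw [interior_Icc] at ht
    have hgrad : ⟪gradient f (x + t • v) - gradient f x, v⟫ ≤ L * t * ‖v‖ ^ 2 :=
      calc ⟪gradient f (x + t • v) - gradient f x, v⟫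
          ≤ ‖gradient f (x + t • v) - gradient f x‖ * ‖v‖ := real_inner_le_norm _ _
        _ ≤ L * ‖x + t • v - x‖ * ‖v‖ := by gcongr; exact hlip _ _
        _ = L * t * ‖v‖ ^ 2 := by
          rw [add_sub_cancel_left, norm_smul, Real.norm_of_nonneg ht.1.le]; ring
    rw [inner_sub_left] at hgrad
    linarith
  have := hanti (by simp) (by simp) zero_le_one
  simp only [φ, zero_smul, add_zero, one_smul, zero_mul, sub_zero, one_mul, one_pow,
    ne_eq, OfNat.ofNat_ne_zero, not_false_eq_true, zero_pow, mul_zero] at this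
  linarith

lemma comp_sub_smul_le_of_lipschitz_gradient (hf : Differentiable ℝ f) {L : ℝ}
    (hlip : ∀ x y, ‖gradient f x - gradient f y‖ ≤ L * ‖x - y‖) (x v : E) (η : ℝ) :
    f (x - η • v) ≤ f x + ⟪(-η) • gradient f x, v⟫ + L / 2 * η ^ 2 * ‖v‖ ^ 2 := by
  have h := le_add_inner_gradient_add_of_lipschitz_gradient hf hlip x (x - η • v)
  rw [sub_sub_cancel_left, inner_neg_right, norm_neg, real_inner_smul_right, norm_smul, mul_pow,
    Real.norm_eq_abs, sq_abs] at h
  rw [real_inner_smul_left]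
  linarith

end Smooth

section Moments

variable {Ω E : Type*} [MeasurableSpace Ω] {μ : Measure Ω}
  [NormedAddCommGroup E] [InnerProductSpace ℝ E] {X : Ω → E}

lemma norm_sq_eq_norm_sub_sq_add_inner_add_norm_sq (a m : E) :
    ‖a‖ ^ 2 = ‖a - m‖ ^ 2 + 2 * ⟪m, a - m⟫ + ‖m‖ ^ 2 := by
  have h := norm_add_sq_real (a - m) m
  rw [sub_add_cancel, real_inner_comm] at h
  exact h

lemma norm_sub_smul_sub_sq (x z v : E) (η : ℝ) :
    ‖x - η • v - z‖ ^ 2 = ‖x - z‖ ^ 2 + ⟪(-(2 * η)) • (x - z), v⟫ + η ^ 2 * ‖v‖ ^ 2 := by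
  rw [sub_right_comm, norm_sub_sq_real, real_inner_smul_right, real_inner_smul_left, norm_smul,
    mul_pow, Real.norm_eq_abs, sq_abs]
  ring

lemma integrable_norm_sq_of_integrable_norm_sub_sq [IsFiniteMeasure μ] (hX : Integrable X μ)
    (m : E) (hXm : Integrable (fun ω => ‖X ω - m‖ ^ 2) μ) :
    Integrable (fun ω => ‖X ω‖ ^ 2) μ := by
  rw [funext fun ω => norm_sq_eq_norm_sub_sq_add_inner_add_norm_sq (X ω) m]
  exact (hXm.add (((hX.sub (integrable_const m)).const_inner m).const_mul 2)).add
    (integrable_const _)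

lemma integrable_const_add_inner_add_mul_norm_sq [IsFiniteMeasure μ] (hX : Integrable X μ)
    (hX2 : Integrable (fun ω => ‖X ω‖ ^ 2) μ) (a b : ℝ) (w : E) :
    Integrable (fun ω => a + ⟪w, X ω⟫ + b * ‖X ω‖ ^ 2) μ :=
  ((integrable_const a).add (hX.const_inner w)).add (hX2.const_mul b)

lemma integrable_norm_sub_smul_sub_sq [IsFiniteMeasure μ] (hX : Integrable X μ)
    (hX2 : Integrable (fun ω => ‖X ω‖ ^ 2) μ) (x z : E) (η : ℝ) :
    Integrable (fun ω => ‖x - η • X ω - z‖ ^ 2) μ := by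
  simp_rw [norm_sub_smul_sub_sq]
  exact integrable_const_add_inner_add_mul_norm_sq hX hX2 _ _ _

variable [IsProbabilityMeasure μ]

lemma integral_const_mul_sub_const_add {F G : Ω → ℝ} (hF : Integrable F μ)
    (hG : Integrable G μ) (a c : ℝ) :
    ∫ ω, (a * (F ω - c) + G ω) ∂μ = a * ((∫ ω, F ω ∂μ) - c) + ∫ ω, G ω ∂μ := by
  have hFc : Integrable (fun ω => a * (F ω - c)) μ := (hF.sub (integrable_const c)).const_mul a
  rw [integral_add hFc hG, integral_const_mul, integral_sub hF (integrable_const c),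
    integral_const]
  simp

variable [CompleteSpace E]

lemma integral_norm_sq_eq_integral_norm_sub_sq_add {m : E}
    (hX : Integrable X μ) (hmean : ∫ ω, X ω ∂μ = m)
    (hXm : Integrable (fun ω => ‖X ω - m‖ ^ 2) μ) :
    ∫ ω, ‖X ω‖ ^ 2 ∂μ = ∫ ω, ‖X ω - m‖ ^ 2 ∂μ + ‖m‖ ^ 2 := by
  have hcentered : Integrable (fun ω => X ω - m) μ := hX.sub (integrable_const m)
  have hcross : Integrable (fun ω => 2 * ⟪m, X ω - m⟫) μ := (hcentered.const_inner m).const_mul 2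
  have hsum : Integrable (fun ω => ‖X ω - m‖ ^ 2 + 2 * ⟪m, X ω - m⟫) μ := hXm.add hcross
  rw [funext fun ω => norm_sq_eq_norm_sub_sq_add_inner_add_norm_sq (X ω) m,
    integral_add hsum (integrable_const _), integral_add hXm hcross, integral_const_mul,
    integral_inner hcentered, integral_sub hX (integrable_const m), hmean, integral_const]
  simp

lemma integral_norm_sq_le_of_integral_norm_sub_sq_le {m : E} {c : ℝ}
    (hX : Integrable X μ) (hmean : ∫ ω, X ω ∂μ = m)
    (hXm : Integrable (fun ω => ‖X ω - m‖ ^ 2) μ) (hvar : ∫ ω, ‖X ω - m‖ ^ 2 ∂μ ≤ c * ‖m‖ ^ 2) :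
    ∫ ω, ‖X ω‖ ^ 2 ∂μ ≤ (1 + c) * ‖m‖ ^ 2 := by
  rw [integral_norm_sq_eq_integral_norm_sub_sq_add hX hmean hXm]
  linarith

lemma integral_const_add_inner_add_mul_norm_sq (hX : Integrable X μ)
    (hX2 : Integrable (fun ω => ‖X ω‖ ^ 2) μ) (a b : ℝ) (w : E) :
    ∫ ω, (a + ⟪w, X ω⟫ + b * ‖X ω‖ ^ 2) ∂μ
      = a + ⟪w, ∫ ω, X ω ∂μ⟫ + b * ∫ ω, ‖X ω‖ ^ 2 ∂μ := by
  have hlin : Integrable (fun ω => a + ⟪w, X ω⟫) μ := (integrable_const a).add (hX.const_inner w)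
  rw [integral_add hlin (hX2.const_mul b), integral_add (integrable_const a) (hX.const_inner w),
    integral_const_mul, integral_inner hX, integral_const]
  simp

lemma integral_norm_sub_smul_sub_sq (hX : Integrable X μ)
    (hX2 : Integrable (fun ω => ‖X ω‖ ^ 2) μ) (x z : E) (η : ℝ) :
    ∫ ω, ‖x - η • X ω - z‖ ^ 2 ∂μ
      = ‖x - z‖ ^ 2 - 2 * η * ⟪x - z, ∫ ω, X ω ∂μ⟫ + η ^ 2 * ∫ ω, ‖X ω‖ ^ 2 ∂μ := by
  simp_rw [norm_sub_smul_sub_sq]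
  rw [integral_const_add_inner_add_mul_norm_sq hX hX2, real_inner_smul_left]
  ring

end Moments

section Step

variable {Ω E : Type*} [MeasurableSpace Ω] {μ : Measure Ω}
  [NormedAddCommGroup E] [InnerProductSpace ℝ E] [CompleteSpace E] {f : E → ℝ} {L : ℝ}
  {X : Ω → E}

lemma integrable_comp_sub_smul [IsFiniteMeasure μ] (hconv : ConvexOn ℝ Set.univ f)
    (hf : Differentiable ℝ f) (hlip : ∀ x y, ‖gradient f x - gradient f y‖ ≤ L * ‖x - y‖)
    (hX : Integrable X μ) (hX2 : Integrable (fun ω => ‖X ω‖ ^ 2) μ) (x : E) (η : ℝ) :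
    Integrable (fun ω => f (x - η • X ω)) μ := by
  have hlower : ∀ ω, f x + ⟪(-η) • gradient f x, X ω⟫ ≤ f (x - η • X ω) := fun ω => by
    have h := hconv.add_inner_gradient_le (hf x) (x - η • X ω)
    rwa [sub_sub_cancel_left, ← neg_smul, real_inner_smul_right, ← real_inner_smul_left] at h
  have hmeas : AEStronglyMeasurable (fun ω => x - η • X ω) μ := by
    have := hX.aestronglyMeasurable
    fun_prop
  exact integrable_of_le_of_le (hf.continuous.comp_aestronglyMeasurable hmeas)
    (.of_forall hlower) (.of_forall fun ω => comp_sub_smul_le_of_lipschitz_gradient hf hlip x _ η)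
    ((integrable_const _).add (hX.const_inner _))
    (integrable_const_add_inner_add_mul_norm_sq hX hX2 _ _ _)

lemma integral_comp_sub_smul_le [IsProbabilityMeasure μ] (hf : Differentiable ℝ f)
    (hlip : ∀ x y, ‖gradient f x - gradient f y‖ ≤ L * ‖x - y‖) (hX : Integrable X μ)
    (hX2 : Integrable (fun ω => ‖X ω‖ ^ 2) μ) {x : E} {η : ℝ}
    (hint : Integrable (fun ω => f (x - η • X ω)) μ) :
    ∫ ω, f (x - η • X ω) ∂μ
      ≤ f x - η * ⟪gradient f x, ∫ ω, X ω ∂μ⟫ + L / 2 * η ^ 2 * ∫ ω, ‖X ω‖ ^ 2 ∂μ := by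
  calc ∫ ω, f (x - η • X ω) ∂μ
      ≤ ∫ ω, (f x + ⟪(-η) • gradient f x, X ω⟫ + L / 2 * η ^ 2 * ‖X ω‖ ^ 2) ∂μ :=
        integral_mono hint (integrable_const_add_inner_add_mul_norm_sq hX hX2 _ _ _)
          fun ω => comp_sub_smul_le_of_lipschitz_gradient hf hlip x _ η
    _ = f x - η * ⟪gradient f x, ∫ ω, X ω ∂μ⟫ + L / 2 * η ^ 2 * ∫ ω, ‖X ω‖ ^ 2 ∂μ := by
        rw [integral_const_add_inner_add_mul_norm_sq hX hX2, real_inner_smul_left]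
        ring

end Step

lemma lyapunov_decrease_of_bounds {L η om G S F Fstar N I Ef En : ℝ} (hom : 0 ≤ om)
    (hη : 0 < η) (hηL : L * η * (1 + om) < 2) (hS : S ≤ (1 + om) * G)
    (hEf : Ef ≤ F - η * G + L / 2 * η ^ 2 * S) (hEn : En = N - 2 * η * I + η ^ 2 * S)
    (hconv : F - Fstar ≤ I) :
    η * (1 + om) / (1 - L * η * (1 + om) / 2) * (Ef - Fstar) + En + 2 * η * (F - Fstar)
      ≤ η * (1 + om) / (1 - L * η * (1 + om) / 2) * (F - Fstar) + N := by
  set A := η * (1 + om) / (1 - L * η * (1 + om) / 2)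
  have hA : 0 ≤ A := div_nonneg (by positivity) (by linarith)
  have hcoef : (A * (L / 2 * η ^ 2) + η ^ 2) * (1 + om) = A * η := by
    have hAP : A * (1 - L * η * (1 + om) / 2) = η * (1 + om) :=
      div_mul_cancel₀ _ (by linarith)
    linear_combination -η * hAP
  have hcoef_nonneg : 0 ≤ A * (L / 2 * η ^ 2) + η ^ 2 :=
    nonneg_of_mul_nonneg_left (hcoef ▸ mul_nonneg hA hη.le) (by linarith)
  have hSterms : (A * (L / 2 * η ^ 2) + η ^ 2) * S ≤ A * η * G :=
    calc (A * (L / 2 * η ^ 2) + η ^ 2) * S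
        ≤ (A * (L / 2 * η ^ 2) + η ^ 2) * ((1 + om) * G) := by gcongr
      _ = A * η * G := by rw [← mul_assoc, hcoef]
  have hfterm := mul_le_mul_of_nonneg_left (sub_le_sub_right hEf Fstar) hA
  have hconvterm := mul_le_mul_of_nonneg_left hconv (by positivity : 0 ≤ 2 * η)
  linarith

theorem cgd_one_step_lyapunov_general {d : ℕ}
    (f : EuclideanSpace ℝ (Fin d) → ℝ) (L : ℝ)
    (hconv : ConvexOn ℝ Set.univ f) (hdiff : Differentiable ℝ f)
    (hlip : ∀ x y, ‖gradient f x - gradient f y‖ ≤ L * ‖x - y‖)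
    (xstar : EuclideanSpace ℝ (Fin d))
    (om η : ℝ) (hom : 0 ≤ om) (hη : 0 < η) (hηL : L * η * (1 + om) < 2)
    {Ω : Type*} [MeasureSpace Ω] [IsProbabilityMeasure (volume : Measure Ω)]
    (C : Ω → EuclideanSpace ℝ (Fin d) → EuclideanSpace ℝ (Fin d))
    (hCint : ∀ v, Integrable (fun ω => C ω v))
    (hCmean : ∀ v, (∫ ω, C ω v) = v)
    (hCsqint : ∀ v, Integrable (fun ω => ‖C ω v - v‖ ^ 2))
    (hCvar : ∀ v, (∫ ω, ‖C ω v - v‖ ^ 2) ≤ om * ‖v‖ ^ 2)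
    (xk : EuclideanSpace ℝ (Fin d)) (xnext : Ω → EuclideanSpace ℝ (Fin d))
    (hx : ∀ ω, xnext ω = xk - η • C ω (gradient f xk)) :
    (∫ ω, (η * (1 + om) / (1 - L * η * (1 + om) / 2) * (f (xnext ω) - f xstar)
          + ‖xnext ω - xstar‖ ^ 2))
        + 2 * η * (f xk - f xstar)
      ≤ η * (1 + om) / (1 - L * η * (1 + om) / 2) * (f xk - f xstar)
        + ‖xk - xstar‖ ^ 2 := by
  obtain rfl : xnext = fun ω => xk - η • C ω (gradient f xk) := funext hx
  set g := gradient f xk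
  have hX := hCint g
  have hX2 := integrable_norm_sq_of_integrable_norm_sub_sq hX g (hCsqint g)
  have hfint := integrable_comp_sub_smul hconv hdiff hlip hX hX2 xk η
  have hEf := integral_comp_sub_smul_le hdiff hlip hX hX2 hfint
  rw [hCmean, real_inner_self_eq_norm_sq] at hEf
  have hgap : f xk - f xstar ≤ ⟪xk - xstar, g⟫ := by
    have h := hconv.add_inner_gradient_le (hdiff xk) xstar
    rw [← neg_sub, inner_neg_right, real_inner_comm] at h
    linarith
  rw [integral_const_mul_sub_const_add hfint (integrable_norm_sub_smul_sub_sq hX hX2 xk xstar η)]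
  exact lyapunov_decrease_of_bounds hom hη hηL
    (integral_norm_sq_le_of_integral_norm_sub_sq_le hX (hCmean g) (hCsqint g) (hCvar g)) hEf
    (by rw [integral_norm_sub_smul_sub_sq hX hX2, hCmean]) hgap

theorem cgd_one_step_lyapunov {d : ℕ}
    (f : EuclideanSpace ℝ (Fin d) → ℝ) (L : ℝ)
    (hconv : ConvexOn ℝ Set.univ f) (hdiff : Differentiable ℝ f)
    (hlip : ∀ x y, ‖gradient f x - gradient f y‖ ≤ L * ‖x - y‖)
    (xstar : EuclideanSpace ℝ (Fin d)) (hmin : ∀ x, f xstar ≤ f x)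
    (om η : ℝ) (hom : 0 ≤ om) (hη : 0 < η) (hηL : L * η * (1 + om) < 2)
    {Ω : Type*} [MeasureSpace Ω] [IsProbabilityMeasure (volume : Measure Ω)]
    (C : Ω → EuclideanSpace ℝ (Fin d) → EuclideanSpace ℝ (Fin d))
    (hCint : ∀ v, Integrable (fun ω => C ω v))
    (hCmean : ∀ v, (∫ ω, C ω v) = v)
    (hCsqint : ∀ v, Integrable (fun ω => ‖C ω v - v‖ ^ 2))
    (hCvar : ∀ v, (∫ ω, ‖C ω v - v‖ ^ 2) ≤ om * ‖v‖ ^ 2)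
    (xk : EuclideanSpace ℝ (Fin d)) (xnext : Ω → EuclideanSpace ℝ (Fin d))
    (hx : ∀ ω, xnext ω = xk - η • C ω (gradient f xk)) :
    (∫ ω, (η * (1 + om) / (1 - L * η * (1 + om) / 2) * (f (xnext ω) - f xstar)
          + ‖xnext ω - xstar‖ ^ 2))
        + 2 * η * (f xk - f xstar)
      ≤ η * (1 + om) / (1 - L * η * (1 + om) / 2) * (f xk - f xstar)
        + ‖xk - xstar‖ ^ 2 :=
  cgd_one_step_lyapunov_general f L hconv hdiff hlip xstar om η hom hη hηL C hCint hCmean hCsqint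
    hCvar xk xnext hx
end

section
/- Let f : ℝ^d → ℝ be μ-strongly convex (μ ≥ 0) and differentiable with L-Lipschitz continuous gradient. Let x^k, y^k ∈ ℝ^d, η > 0, p ≠ 0, 0 ≤ γ/p ≤ 1, let g be a square-integrable random vector with E[g] = ∇f(x^k), and set y^{k+1} = x^k − (η/p) g. Then for every x ∈ ℝ^d: E[f(y^{k+1})] ≤ (1 − γ/p) f(y^k) + (γ/p) f(x) − ⟨∇f(x^k), (1 − γ/p)(y^k − x^k) + (γ/p)(x − x^k)⟩ − (1 − γ/p)(μ/2)‖y^k − x^k‖² − (γμ/(2p))‖x − x^k‖² − (η/p)‖∇f(x^k)‖² + (Lη²/(2p²)) E[‖g‖²]. -/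
/-!
Around `xᵏ`, the Lipschitz gradient gives the quadratic model
`|f (a + v) - f a - ⟪∇f a, v⟫| ≤ L/2 ‖v‖²`. Taking expectations along `v = -(η/p) g` with
`E g = ∇f xᵏ` bounds `E f(yᵏ⁺¹)` by `f xᵏ - (η/p) ‖∇f xᵏ‖² + (L η² / 2p²) E ‖g‖²`; the model also
sandwiches `f (yᵏ⁺¹)` between integrable functions, so the expectation exists. Finally the
first-order strong convexity inequalities at `yᵏ` and at `x`, weighted by `1 - γ/p` and `γ/p`,
bound `f xᵏ` by the remaining terms.
-/

open MeasureTheory RealInnerProductSpace Set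

section Smooth

variable {E : Type*} [NormedAddCommGroup E] [InnerProductSpace ℝ E] [CompleteSpace E]
  {f : E → ℝ} {L : ℝ}

theorem abs_sub_sub_inner_gradient_le (hf : Differentiable ℝ f)
    (hlip : ∀ x y, ‖gradient f x - gradient f y‖ ≤ L * ‖x - y‖) (a v : E) :
    |f (a + v) - f a - ⟪gradient f a, v⟫| ≤ L / 2 * ‖v‖ ^ 2 := by
  set φ : ℝ → ℝ := fun t => f (a + t • v) - f a - t * ⟪gradient f a, v⟫
  -- `|φ' t| ≤ L t ‖v‖²`, the derivative of the boundary `L/2 t² ‖v‖²`, and `φ 0 = 0`.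
  have hφ : ∀ t, HasDerivAt φ ⟪gradient f (a + t • v) - gradient f a, v⟫ t := by
    intro t
    have hline : HasDerivAt (fun t : ℝ => a + t • v) v t := by
      simpa using ((hasDerivAt_id t).smul_const v).const_add a
    have hf_line := (hf (a + t • v)).hasFDerivAt.comp_hasDerivAt t hline
    rw [(hf (a + t • v)).hasGradientAt.fderiv_apply] at hf_line
    rw [inner_sub_left]
    exact (hf_line.sub_const (f a)).sub (hasDerivAt_mul_const ⟪gradient f a, v⟫)
  have hB : ∀ t : ℝ, HasDerivAt (fun t => L / 2 * t ^ 2 * ‖v‖ ^ 2) (L * t * ‖v‖ ^ 2) t := by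
    intro t
    refine (((hasDerivAt_pow 2 t).const_mul (L / 2)).mul_const (‖v‖ ^ 2)).congr_deriv ?_
    ring
  have hbound : ∀ t ∈ Ico (0 : ℝ) 1,
      ‖⟪gradient f (a + t • v) - gradient f a, v⟫‖ ≤ L * t * ‖v‖ ^ 2 := by
    intro t ht
    calc ‖⟪gradient f (a + t • v) - gradient f a, v⟫‖
        ≤ ‖gradient f (a + t • v) - gradient f a‖ * ‖v‖ := norm_inner_le_norm _ _
      _ ≤ L * ‖t • v‖ * ‖v‖ := by
          gcongr
          simpa using hlip (a + t • v) a
      _ = L * t * ‖v‖ ^ 2 := by rw [norm_smul, Real.norm_of_nonneg ht.1]; ring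
  have := image_norm_le_of_norm_deriv_right_le_deriv_boundary
    (fun t _ => (hφ t).continuousAt.continuousWithinAt) (fun t _ => (hφ t).hasDerivWithinAt)
    (by simp [φ]) hB hbound (right_mem_Icc.2 zero_le_one)
  simpa [φ] using this

theorem abs_apply_sub_smul_sub_le (hf : Differentiable ℝ f)
    (hlip : ∀ x y, ‖gradient f x - gradient f y‖ ≤ L * ‖x - y‖) (a w : E) (t : ℝ) :
    |f (a - t • w) - (f a - t * ⟪gradient f a, w⟫)| ≤ L / 2 * t ^ 2 * ‖w‖ ^ 2 := by
  have h := abs_sub_sub_inner_gradient_le hf hlip a (-(t • w))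
  rw [← sub_eq_add_neg, inner_neg_right, real_inner_smul_right, norm_neg, norm_smul,
    Real.norm_eq_abs, mul_pow, sq_abs] at h
  convert h using 1
  · ring_nf
  · ring

section Expectation

variable {Ω : Type*} [MeasurableSpace Ω] {P : Measure Ω} [IsProbabilityMeasure P] {g : Ω → E}

theorem integrable_apply_sub_smul (hf : Differentiable ℝ f)
    (hlip : ∀ x y, ‖gradient f x - gradient f y‖ ≤ L * ‖x - y‖) (a : E) (t : ℝ)
    (hg : Integrable g P) (hg2 : Integrable (fun ω => ‖g ω‖ ^ 2) P) :
    Integrable (fun ω => f (a - t • g ω)) P := by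
  refine integrable_of_norm_sub_le (f₀ := fun ω => f a - t * ⟪gradient f a, g ω⟫)
    (hf.continuous.comp_aestronglyMeasurable
      (aestronglyMeasurable_const.sub (hg.aestronglyMeasurable.const_smul t)))
    ((integrable_const _).sub ((hg.const_inner _).const_mul t))
    (hg2.const_mul (L / 2 * t ^ 2)) (ae_of_all _ fun ω => ?_)
  rw [norm_sub_rev]
  exact abs_apply_sub_smul_sub_le hf hlip a (g ω) t

theorem integral_apply_sub_smul_le (hf : Differentiable ℝ f)
    (hlip : ∀ x y, ‖gradient f x - gradient f y‖ ≤ L * ‖x - y‖) (a : E) (t : ℝ)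
    (hg : Integrable g P) (hg2 : Integrable (fun ω => ‖g ω‖ ^ 2) P) :
    ∫ ω, f (a - t • g ω) ∂P
      ≤ f a - t * ⟪gradient f a, ∫ ω, g ω ∂P⟫ + L / 2 * t ^ 2 * ∫ ω, ‖g ω‖ ^ 2 ∂P := by
  have hinner : Integrable (fun ω => t * ⟪gradient f a, g ω⟫) P := (hg.const_inner _).const_mul t
  have hlin : Integrable (fun ω => f a - t * ⟪gradient f a, g ω⟫) P :=
    (integrable_const _).sub hinner
  calc ∫ ω, f (a - t • g ω) ∂P
      ≤ ∫ ω, (f a - t * ⟪gradient f a, g ω⟫ + L / 2 * t ^ 2 * ‖g ω‖ ^ 2) ∂P :=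
        integral_mono (integrable_apply_sub_smul hf hlip a t hg hg2)
          (hlin.add (hg2.const_mul _))
          fun ω => by linarith [(abs_le.1 (abs_apply_sub_smul_sub_le hf hlip a (g ω) t)).2]
    _ = f a - t * ⟪gradient f a, ∫ ω, g ω ∂P⟫ + L / 2 * t ^ 2 * ∫ ω, ‖g ω‖ ^ 2 ∂P := by
        rw [integral_add hlin (hg2.const_mul _), integral_sub (integrable_const _) hinner,
          integral_const, integral_const_mul, integral_const_mul, integral_inner hg]
        simp

end Expectation

end Smooth

theorem apply_le_of_strongConvex_first_order {E : Type*} [NormedAddCommGroup E]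
    [InnerProductSpace ℝ E] [CompleteSpace E] {f : E → ℝ} {μ : ℝ}
    (hsc : ∀ x y, μ / 2 * ‖x - y‖ ^ 2 ≤ f x - f y - ⟪gradient f y, x - y⟫) (z y x : E) {α : ℝ}
    (hα0 : 0 ≤ α) (hα1 : α ≤ 1) :
    f z ≤ (1 - α) * f y + α * f x - ⟪gradient f z, (1 - α) • (y - z) + α • (x - z)⟫
      - (1 - α) * (μ / 2) * ‖y - z‖ ^ 2 - α * (μ / 2) * ‖x - z‖ ^ 2 := by
  rw [inner_add_right, real_inner_smul_right, real_inner_smul_right]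
  linarith [mul_le_mul_of_nonneg_left (hsc y z) (sub_nonneg.2 hα1),
    mul_le_mul_of_nonneg_left (hsc x z) hα0]

theorem acgd_y_descent_general {d : ℕ}
    (f : EuclideanSpace ℝ (Fin d) → ℝ) (L μ : ℝ)
    (hdiff : Differentiable ℝ f)
    (hlip : ∀ x y, ‖gradient f x - gradient f y‖ ≤ L * ‖x - y‖)
    (hsc : ∀ x y, μ / 2 * ‖x - y‖ ^ 2 ≤ f x - f y - ⟪gradient f y, x - y⟫)
    (xk yk : EuclideanSpace ℝ (Fin d))
    (η γ p : ℝ) (hγp0 : 0 ≤ γ / p) (hγp1 : γ / p ≤ 1)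
    {Ω : Type*} [MeasureSpace Ω] [IsProbabilityMeasure (volume : Measure Ω)]
    (g : Ω → EuclideanSpace ℝ (Fin d))
    (hgint : Integrable g)
    (hgsq : Integrable (fun ω => ‖g ω‖ ^ 2))
    (hgmean : (∫ ω, g ω) = gradient f xk)
    (ynext : Ω → EuclideanSpace ℝ (Fin d))
    (hy : ∀ ω, ynext ω = xk - (η / p) • g ω)
    (x : EuclideanSpace ℝ (Fin d)) :
    (∫ ω, f (ynext ω))
      ≤ (1 - γ / p) * f yk + (γ / p) * f x
        - ⟪gradient f xk, (1 - γ / p) • (yk - xk) + (γ / p) • (x - xk)⟫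
        - (1 - γ / p) * (μ / 2) * ‖yk - xk‖ ^ 2
        - γ * μ / (2 * p) * ‖x - xk‖ ^ 2
        - η / p * ‖gradient f xk‖ ^ 2
        + L * η ^ 2 / (2 * p ^ 2) * (∫ ω, ‖g ω‖ ^ 2) := by
  simp only [hy]
  have hstep := integral_apply_sub_smul_le hdiff hlip xk (η / p) hgint hgsq
  rw [hgmean, real_inner_self_eq_norm_sq] at hstep
  have hconv := apply_le_of_strongConvex_first_order hsc xk yk x hγp0 hγp1
  rw [show γ * μ / (2 * p) = γ / p * (μ / 2) by ring,
    show L * η ^ 2 / (2 * p ^ 2) = L / 2 * (η / p) ^ 2 by ring]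
  linarith

theorem acgd_y_descent {d : ℕ}
    (f : EuclideanSpace ℝ (Fin d) → ℝ) (L μ : ℝ) (hμ : 0 ≤ μ)
    (hdiff : Differentiable ℝ f)
    (hlip : ∀ x y, ‖gradient f x - gradient f y‖ ≤ L * ‖x - y‖)
    (hsc : ∀ x y, μ / 2 * ‖x - y‖ ^ 2 ≤ f x - f y - ⟪gradient f y, x - y⟫)
    (xk yk : EuclideanSpace ℝ (Fin d))
    (η γ p : ℝ) (hη : 0 < η) (hp : p ≠ 0) (hγp0 : 0 ≤ γ / p) (hγp1 : γ / p ≤ 1)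
    {Ω : Type*} [MeasureSpace Ω] [IsProbabilityMeasure (volume : Measure Ω)]
    (g : Ω → EuclideanSpace ℝ (Fin d))
    (hgint : Integrable g)
    (hgsq : Integrable (fun ω => ‖g ω‖ ^ 2))
    (hgmean : (∫ ω, g ω) = gradient f xk)
    (ynext : Ω → EuclideanSpace ℝ (Fin d))
    (hy : ∀ ω, ynext ω = xk - (η / p) • g ω)
    (x : EuclideanSpace ℝ (Fin d)) :
    (∫ ω, f (ynext ω))
      ≤ (1 - γ / p) * f yk + (γ / p) * f x
        - ⟪gradient f xk, (1 - γ / p) • (yk - xk) + (γ / p) • (x - xk)⟫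
        - (1 - γ / p) * (μ / 2) * ‖yk - xk‖ ^ 2
        - γ * μ / (2 * p) * ‖x - xk‖ ^ 2
        - η / p * ‖gradient f xk‖ ^ 2
        + L * η ^ 2 / (2 * p ^ 2) * (∫ ω, ‖g ω‖ ^ 2) :=
  acgd_y_descent_general f L μ hdiff hlip hsc xk yk η γ p hγp0 hγp1 g hgint hgsq hgmean ynext hy x
end

section
/- Let f_1, …, f_n : ℝ^d → ℝ be convex and differentiable with L-Lipschitz continuous gradients, let f = (1/n)∑_{i=1}^n f_i be μ-strongly convex (μ ≥ 0), let ψ : ℝ^d → ℝ be convex, and P = f + ψ. Let x ∈ ℝ^d, 0 < η ≤ 1/(2L), let g be a square-integrable random vector with E[g] = ∇f(x), and let the random point y⁺ satisfy y⁺ = x − η g − η Δ for some random Δ with ψ(u) ≥ ψ(y⁺) + ⟨Δ, u − y⁺⟩ for all u ∈ ℝ^d. Then for every u ∈ ℝ^d: E[P(y⁺)] ≤ P(u) − (1/η) E[⟨x − y⁺, u − x⟩] + (η/2) E[‖∇f(x) − g‖²] − (1/(4η)) E[‖y⁺ − x‖²] − max{ (μ/2)‖u − x‖², (1/(2Ln))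 ∑_{i=1}^n ‖∇f_i(u) − ∇f_i(x)‖² }. -/
/-!
Pointwise in `ω` this is the usual proximal-gradient estimate: the descent lemma for `f` at `x`,
the subgradient inequality for `ψ` at `y⁺` tested at `u`, Young's inequality for the noise term
`⟪∇f(x) - g, y⁺ - x⟫`, and `ηL ≤ 1/2`. The maximum is a lower bound for the Bregman divergence
`D_f(u, x)`: by strong convexity, and by averaging cocoercivity
`D_{f_i}(u, x) ≥ ‖∇f_i(u) - ∇f_i(x)‖² / (2L)`. Taking expectations removes `⟪∇f(x) - g, u - x⟫`.

The integrals are genuine, not junk values, because the proximal map is nonexpansive: `y⁺` is a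
1-Lipschitz function of `x - ηg`, hence measurable and square integrable, and `P(y⁺)` lies between
an affine minorant and the integrable pointwise bound.
-/

open MeasureTheory RealInnerProductSpace Set
open scoped NNReal

section Bregman

variable {E : Type*} [NormedAddCommGroup E] [InnerProductSpace ℝ E] [CompleteSpace E]
  {h : E → ℝ} {L : ℝ}

noncomputable def bregmanDiv (h : E → ℝ) (a b : E) : ℝ := h a - h b - ⟪gradient h b, a - b⟫

lemma bregmanDiv_add_bregmanDiv (h : E → ℝ) (a b c : E) :
    bregmanDiv h c a + bregmanDiv h a b
      = bregmanDiv h c b - ⟪gradient h a - gradient h b, c - a⟫ := by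
  simp only [bregmanDiv, inner_sub_left, inner_sub_right]
  ring

lemma hasDerivAt_comp_add_smul (hh : Differentiable ℝ h) (a v : E) (t : ℝ) :
    HasDerivAt (fun s : ℝ => h (a + s • v)) ⟪gradient h (a + t • v), v⟫ t := by
  have hline : HasDerivAt (fun s : ℝ => a + s • v) v t := by
    simpa using ((hasDerivAt_id t).smul_const v).const_add a
  simpa [InnerProductSpace.toDual_apply_apply, Function.comp_def] using
    (hasGradientAt_iff_hasFDerivAt.mp (hh _).hasGradientAt).comp_hasDerivAt t hline

lemma bregmanDiv_nonneg (hc : ConvexOn ℝ univ h) (hh : Differentiable ℝ h) (a b : E) :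
    0 ≤ bregmanDiv h a b := by
  have hline : ConvexOn ℝ univ fun t : ℝ => h (b + t • (a - b)) := by
    simpa [Function.comp_def, AffineMap.lineMap_apply, add_comm]
      using hc.comp_affineMap (AffineMap.lineMap b a)
  have := hline.le_slope_of_hasDerivAt (mem_univ 0) (mem_univ 1) one_pos
    (by simpa only [zero_smul, add_zero] using hasDerivAt_comp_add_smul hh b (a - b) 0)
  simp only [slope_def_field, zero_smul, one_smul, add_zero, sub_zero, div_one,
    add_sub_cancel] at this
  simp only [bregmanDiv]
  linarith

lemma bregmanDiv_le (hh : Differentiable ℝ h)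
    (hlip : ∀ p q, ‖gradient h p - gradient h q‖ ≤ L * ‖p - q‖) (a b : E) :
    bregmanDiv h a b ≤ L / 2 * ‖a - b‖ ^ 2 := by
  set v := a - b
  let φ : ℝ → ℝ := fun t => h (b + t • v) - t * ⟪gradient h b, v⟫ - L / 2 * t ^ 2 * ‖v‖ ^ 2
  have hφ : ∀ t, HasDerivAt φ
      (⟪gradient h (b + t • v), v⟫ - ⟪gradient h b, v⟫ - L * t * ‖v‖ ^ 2) t := by
    intro t
    refine (((hasDerivAt_comp_add_smul hh b v t).fun_sub
      ((hasDerivAt_id t).mul_const ⟪gradient h b, v⟫)).fun_sub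
      (((hasDerivAt_pow 2 t).const_mul (L / 2)).mul_const (‖v‖ ^ 2))).congr_deriv ?_
    ring
  have hanti : AntitoneOn φ (Icc 0 1) := by
    refine antitoneOn_of_hasDerivWithinAt_nonpos (convex_Icc 0 1)
      (fun t _ => (hφ t).continuousAt.continuousWithinAt) (fun t _ => (hφ t).hasDerivWithinAt) ?_
    intro t ht
    rw [interior_Icc] at ht
    have : ⟪gradient h (b + t • v) - gradient h b, v⟫ ≤ L * t * ‖v‖ ^ 2 := by
      calc _ ≤ ‖gradient h (b + t • v) - gradient h b‖ * ‖v‖ := real_inner_le_norm _ _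
        _ ≤ L * ‖b + t • v - b‖ * ‖v‖ := by gcongr; exact hlip _ _
        _ = L * t * ‖v‖ ^ 2 := by
          rw [add_sub_cancel_left, norm_smul, Real.norm_of_nonneg ht.1.le]; ring
    rw [inner_sub_left] at this
    linarith
  have := hanti (left_mem_Icc.2 zero_le_one) (right_mem_Icc.2 zero_le_one) zero_le_one
  simp only [φ, v, zero_smul, one_smul, add_zero, zero_mul, sub_zero, one_mul, add_sub_cancel,
    one_pow, ne_eq, OfNat.ofNat_ne_zero, not_false_eq_true, zero_pow, mul_zero] at this
  simp only [bregmanDiv]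
  linarith

lemma sq_norm_gradient_sub_le_bregmanDiv (hc : ConvexOn ℝ univ h) (hh : Differentiable ℝ h)
    (hL : 0 < L) (hlip : ∀ p q, ‖gradient h p - gradient h q‖ ≤ L * ‖p - q‖) (a b : E) :
    1 / (2 * L) * ‖gradient h a - gradient h b‖ ^ 2 ≤ bregmanDiv h a b := by
  set w := gradient h a - gradient h b
  -- a gradient step from `a` for the tilted function `h - ⟪gradient h b, ·⟫`, minimised at `b`
  set z := a - L⁻¹ • w
  have hz : z - a = -(L⁻¹ • w) := by simp [z]
  have hnorm : L / 2 * ‖z - a‖ ^ 2 = 1 / (2 * L) * ‖w‖ ^ 2 := by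
    rw [hz, norm_neg, norm_smul, mul_pow, Real.norm_of_nonneg (inv_nonneg.2 hL.le)]
    field_simp
  have hinner : ⟪w, z - a⟫ = -(2 * (1 / (2 * L) * ‖w‖ ^ 2)) := by
    rw [hz, inner_neg_right, real_inner_smul_right, real_inner_self_eq_norm_sq]
    field_simp
  have := bregmanDiv_add_bregmanDiv h a b z
  have := bregmanDiv_nonneg hc hh z b
  have := bregmanDiv_le hh hlip z a
  linarith

lemma gradient_eq_smul_sum {ι : Type*} [Fintype ι] {f : E → ℝ} {fi : ι → E → ℝ} {c : ℝ}
    (hfi : ∀ i, Differentiable ℝ (fi i)) (hf : ∀ z, f z = c * ∑ i, fi i z) (z : E) :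
    gradient f z = c • ∑ i, gradient (fi i) z := by
  have hsum := (HasFDerivAt.fun_sum (u := Finset.univ) fun i _ =>
    ((hfi i) z).hasGradientAt.hasFDerivAt).const_mul c
  rw [← funext hf] at hsum
  refine (hasGradientAt_iff_hasFDerivAt.2 ?_).gradient
  simpa [map_sum] using hsum

lemma bregmanDiv_eq_smul_sum {ι : Type*} [Fintype ι] {f : E → ℝ} {fi : ι → E → ℝ} {c : ℝ}
    (hfi : ∀ i, Differentiable ℝ (fi i)) (hf : ∀ z, f z = c * ∑ i, fi i z) (a b : E) :
    bregmanDiv f a b = c * ∑ i, bregmanDiv (fi i) a b := by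
  simp only [bregmanDiv, hf, gradient_eq_smul_sum hfi hf, real_inner_smul_left, sum_inner,
    Finset.sum_sub_distrib]
  ring

end Bregman

section Integrability

variable {Ω : Type*} [MeasurableSpace Ω] {μ : Measure Ω}

lemma MeasureTheory.AEStronglyMeasurable.of_dist_le_mul {α F : Type*} [PseudoMetricSpace α]
    [NormedAddCommGroup F] [NormedSpace ℝ F] [FiniteDimensional ℝ F] {z : Ω → α} {y : Ω → F}
    {K : ℝ≥0} (hz : AEStronglyMeasurable z μ) (h : ∀ a b, dist (y a) (y b) ≤ K * dist (z a) (z b)) :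
    AEStronglyMeasurable y μ := by
  have hfac : Function.FactorsThrough y z := fun a b hab =>
    dist_le_zero.1 (by simpa [hab] using h a b)
  have hlip : LipschitzOnWith K (Function.extend z y 0) (range z) := by
    refine LipschitzOnWith.of_dist_le_mul ?_
    rintro _ ⟨a, rfl⟩ _ ⟨b, rfl⟩
    simpa only [hfac.extend_apply] using h a b
  obtain ⟨G, hG, hGy⟩ := hlip.extend_finite_dimension
  refine (hG.continuous.comp_aestronglyMeasurable hz).congr (ae_of_all _ fun a => ?_)
  simp [← hGy (mem_range_self a), hfac.extend_apply]

lemma MeasureTheory.MemLp.of_dist_le_mul {E F : Type*} [NormedAddCommGroup E] [NormedAddCommGroup F]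
    [IsFiniteMeasure μ] {p : ENNReal} {z : Ω → E} {y : Ω → F} {K : ℝ≥0} (hz : MemLp z p μ)
    (hy : AEStronglyMeasurable y μ) (h : ∀ a b, dist (y a) (y b) ≤ K * dist (z a) (z b)) :
    MemLp y p μ := by
  rcases isEmpty_or_nonempty Ω with hΩ | ⟨⟨a₀⟩⟩
  · simp [Measure.eq_zero_of_isEmpty μ]
  have := (hz.sub (memLp_const (z a₀))).of_le_mul (hy.sub aestronglyMeasurable_const)
    (ae_of_all _ fun a => by simpa [dist_eq_norm] using h a a₀)
  simpa using this.add (memLp_const (y a₀))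

lemma integrable_comp_of_affine_le_of_le {E : Type*} [NormedAddCommGroup E] [InnerProductSpace ℝ E]
    [IsFiniteMeasure μ] {φ : E → ℝ} {y : Ω → E} {G : Ω → ℝ} {a : E} {c : ℝ} (hφ : Continuous φ)
    (hy : Integrable y μ) (hG : Integrable G μ) (hmin : ∀ z, c + ⟪a, z⟫ ≤ φ z)
    (hle : ∀ ω, φ (y ω) ≤ G ω) : Integrable (fun ω => φ (y ω)) μ :=
  integrable_of_le_of_le (hφ.comp_aestronglyMeasurable hy.1) (ae_of_all _ fun ω => hmin (y ω))
    (ae_of_all _ hle) ((integrable_const c).add (hy.const_inner a)) hG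

end Integrability

section Subgradient

variable {E : Type*} [NormedAddCommGroup E] [InnerProductSpace ℝ E]

def HasSubgradientAt (ψ : E → ℝ) (Δ y : E) : Prop := ∀ u, ψ y + ⟪Δ, u - y⟫ ≤ ψ u

lemma HasSubgradientAt.inner_sub_nonneg {ψ : E → ℝ} {Δ Δ' y y' : E} (h : HasSubgradientAt ψ Δ y)
    (h' : HasSubgradientAt ψ Δ' y') : 0 ≤ ⟪Δ - Δ', y - y'⟫ := by
  have := h y'
  have := h' y
  rw [inner_sub_left, ← neg_sub y y', inner_neg_right] at *
  linarith

lemma HasSubgradientAt.dist_le {ψ : E → ℝ} {Δ Δ' y y' : E} {η : ℝ} (h : HasSubgradientAt ψ Δ y)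
    (h' : HasSubgradientAt ψ Δ' y') (hη : 0 ≤ η) :
    dist y y' ≤ dist (y + η • Δ) (y' + η • Δ') := by
  rw [dist_eq_norm, dist_eq_norm]
  have hsq : ‖y - y'‖ ^ 2 ≤ ‖y + η • Δ - (y' + η • Δ')‖ * ‖y - y'‖ :=
    calc ‖y - y'‖ ^ 2 ≤ ⟪y - y', y - y'⟫ + η * ⟪Δ - Δ', y - y'⟫ := by
          rw [real_inner_self_eq_norm_sq]
          linarith [mul_nonneg hη (h.inner_sub_nonneg h')]
      _ = ⟪y + η • Δ - (y' + η • Δ'), y - y'⟫ := by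
          rw [← real_inner_smul_left, ← inner_add_left, smul_sub]
          congr 1
          abel
      _ ≤ _ := real_inner_le_norm _ _
  nlinarith [norm_nonneg (y - y'), norm_nonneg (y + η • Δ - (y' + η • Δ'))]

lemma memLp_of_prox_step [FiniteDimensional ℝ E] {Ω : Type*} [MeasurableSpace Ω] {μ : Measure Ω}
    [IsFiniteMeasure μ] {p : ENNReal} {ψ : E → ℝ} {η : ℝ} {x : E} {g Δ y : Ω → E} (hη : 0 ≤ η)
    (hg : MemLp g p μ) (hy : ∀ ω, y ω = x - η • g ω - η • Δ ω)
    (hΔ : ∀ ω, HasSubgradientAt ψ (Δ ω) (y ω)) : MemLp y p μ := by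
  have hz : MemLp (fun ω => x - η • g ω) p μ := (memLp_const x).sub (hg.const_smul η)
  have hstep : ∀ ω, y ω + η • Δ ω = x - η • g ω := fun ω => by rw [hy]; abel
  have hlip : ∀ a b, dist (y a) (y b) ≤ (1 : ℝ≥0) * dist (x - η • g a) (x - η • g b) := by
    intro a b
    rw [NNReal.coe_one, one_mul, ← hstep, ← hstep]
    exact (hΔ a).dist_le (hΔ b) hη
  exact hz.of_dist_le_mul (hz.1.of_dist_le_mul hlip) hlip

end Subgradient

section ProxGrad

variable {E : Type*} [NormedAddCommGroup E] [InnerProductSpace ℝ E]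

lemma prox_grad_step_le [CompleteSpace E] {f ψ : E → ℝ} {L η : ℝ} {x g Δ y : E} (hη : 0 < η)
    (hηL : 2 * L * η ≤ 1) (hdesc : bregmanDiv f y x ≤ L / 2 * ‖y - x‖ ^ 2) (hΔ : HasSubgradientAt ψ Δ y)
    (hy : y = x - η • g - η • Δ) (u : E) :
    f y + ψ y ≤ f u + ψ u - bregmanDiv f u x - ⟪gradient f x - g, u - x⟫
      - 1 / η * ⟪x - y, u - x⟫ + η / 2 * ‖gradient f x - g‖ ^ 2 - 1 / (4 * η) * ‖y - x‖ ^ 2 := by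
  have hΔeq : Δ = -(η⁻¹ • (y - x)) - g := by
    have : η • Δ = -(y - x) - η • g := by rw [hy]; abel
    rw [← inv_smul_smul₀ hη.ne' Δ, this, smul_sub, smul_neg, inv_smul_smul₀ hη.ne']
  have hyoung : ⟪gradient f x - g, y - x⟫
      ≤ η / 2 * ‖gradient f x - g‖ ^ 2 + η⁻¹ / 2 * ‖y - x‖ ^ 2 := by
    have h2 := two_mul_le_add_sq (η * ‖gradient f x - g‖) ‖y - x‖
    have : ‖gradient f x - g‖ * ‖y - x‖
        ≤ η / 2 * ‖gradient f x - g‖ ^ 2 + η⁻¹ / 2 * ‖y - x‖ ^ 2 := by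
      field_simp
      nlinarith
    linarith [real_inner_le_norm (gradient f x - g) (y - x)]
  have hLη : L / 2 * ‖y - x‖ ^ 2 ≤ η⁻¹ / 4 * ‖y - x‖ ^ 2 := by
    refine mul_le_mul_of_nonneg_right ?_ (sq_nonneg _)
    rw [div_le_div_iff₀ two_pos four_pos, ← div_eq_inv_mul, le_div_iff₀ hη]
    linarith
  have hψ := hΔ u
  rw [hΔeq, ← sub_sub_sub_cancel_right u y x] at hψ
  rw [← neg_sub y x, one_div, one_div, mul_inv, show (4 : ℝ)⁻¹ * η⁻¹ = η⁻¹ / 4 by ring]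
  unfold bregmanDiv at hdesc ⊢
  set r := y - x
  set v := u - x
  simp only [inner_sub_left, inner_sub_right, inner_neg_left,
    real_inner_smul_left, real_inner_self_eq_norm_sq, real_inner_comm v r] at *
  linarith

theorem integral_prox_grad_step_le [FiniteDimensional ℝ E] {Ω : Type*} [MeasurableSpace Ω]
    {μ : Measure Ω} [IsProbabilityMeasure μ] {f ψ : E → ℝ} {L η : ℝ} {x : E} {g Δ y : Ω → E}
    (hfc : Continuous f) (hψ : ConvexOn ℝ univ ψ) (hη : 0 < η) (hηL : 2 * L * η ≤ 1)
    (hfx : ∀ z, 0 ≤ bregmanDiv f z x) (hdesc : ∀ z, bregmanDiv f z x ≤ L / 2 * ‖z - x‖ ^ 2)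
    (hg : Integrable g μ) (hgmean : ∫ ω, g ω ∂μ = gradient f x)
    (hgsq : Integrable (fun ω => ‖gradient f x - g ω‖ ^ 2) μ)
    (hy : ∀ ω, y ω = x - η • g ω - η • Δ ω) (hΔ : ∀ ω, HasSubgradientAt ψ (Δ ω) (y ω)) (u : E) :
    ∫ ω, (f (y ω) + ψ (y ω)) ∂μ
      ≤ f u + ψ u - bregmanDiv f u x - 1 / η * ∫ ω, ⟪x - y ω, u - x⟫ ∂μ
        + η / 2 * ∫ ω, ‖gradient f x - g ω‖ ^ 2 ∂μ - 1 / (4 * η) * ∫ ω, ‖y ω - x‖ ^ 2 ∂μ := by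
  obtain ⟨ω₀⟩ := nonempty_of_isProbabilityMeasure μ
  have he : MemLp (fun ω => gradient f x - g ω) 2 μ :=
    (memLp_two_iff_integrable_sq_norm (aestronglyMeasurable_const.sub hg.1)).2 hgsq
  have hy2 : MemLp y 2 μ :=
    memLp_of_prox_step hη.le (by simpa [Pi.sub_def] using (memLp_const (gradient f x)).sub he) hy hΔ
  have hyx : MemLp (fun ω => y ω - x) 2 μ := hy2.sub (memLp_const x)
  have hinner : Integrable (fun ω => ⟪x - y ω, u - x⟫) μ :=
    (((memLp_const x).sub hy2).integrable one_le_two).inner_const _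
  have hsq : Integrable (fun ω => ‖y ω - x‖ ^ 2) μ :=
    (memLp_two_iff_integrable_sq_norm hyx.1).1 hyx
  have he1 : Integrable (fun ω => gradient f x - g ω) μ := (integrable_const _).sub hg
  have hnoise : Integrable (fun ω => ⟪gradient f x - g ω, u - x⟫) μ := he1.inner_const _
  have hnoise_mean : ∫ ω, ⟪gradient f x - g ω, u - x⟫ ∂μ = 0 := by
    simp_rw [real_inner_comm (u - x)]
    rw [integral_inner he1, integral_sub (integrable_const _) hg,
      integral_const, probReal_univ, one_smul, hgmean, sub_self, inner_zero_right]
  have hG₁ := (integrable_const (f u + ψ u - bregmanDiv f u x)).sub hnoise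
  have hG₂ := hG₁.sub (hinner.const_mul (1 / η))
  have hG₃ := hG₂.add (hgsq.const_mul (η / 2))
  have hG := hG₃.sub (hsq.const_mul (1 / (4 * η)))
  have hmin : ∀ z, f x - ⟪gradient f x, x⟫ + (ψ (y ω₀) - ⟪Δ ω₀, y ω₀⟫)
      + ⟪gradient f x + Δ ω₀, z⟫ ≤ f z + ψ z := by
    intro z
    have := hfx z
    have := hΔ ω₀ z
    simp only [bregmanDiv, inner_add_left, inner_sub_right] at *
    linarith
  have hP : Integrable (fun ω => f (y ω) + ψ (y ω)) μ :=
    integrable_comp_of_affine_le_of_le (hfc.add (continuousOn_univ.1 (hψ.continuousOn isOpen_univ)))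
      (hy2.integrable one_le_two) hG hmin
      fun ω => prox_grad_step_le hη hηL (hdesc _) (hΔ ω) (hy ω) u
  refine (integral_mono hP hG fun ω => prox_grad_step_le hη hηL (hdesc _) (hΔ ω) (hy ω) u).trans
    (le_of_eq ?_)
  rw [integral_sub' hG₃ (hsq.const_mul _), integral_add' hG₂ (hgsq.const_mul _),
    integral_sub' hG₁ (hinner.const_mul _), integral_sub' (integrable_const _) hnoise,
    integral_const, probReal_univ, one_smul, hnoise_mean, integral_const_mul, integral_const_mul,
    integral_const_mul, sub_zero]

end ProxGrad

theorem prox_one_step_bound_general {d n : ℕ} (hn : 0 < n)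
    (L μ : ℝ) (hL : 0 < L)
    (fi : Fin n → EuclideanSpace ℝ (Fin d) → ℝ)
    (hconv : ∀ i, ConvexOn ℝ Set.univ (fi i))
    (hdiff : ∀ i, Differentiable ℝ (fi i))
    (hlip : ∀ i x y, ‖gradient (fi i) x - gradient (fi i) y‖ ≤ L * ‖x - y‖)
    (f : EuclideanSpace ℝ (Fin d) → ℝ)
    (hf : ∀ x, f x = (1 / (n : ℝ)) * ∑ i, fi i x)
    (hsc : ∀ x y, μ / 2 * ‖x - y‖ ^ 2 ≤ f x - f y - ⟪gradient f y, x - y⟫)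
    (ψ : EuclideanSpace ℝ (Fin d) → ℝ) (hψ : ConvexOn ℝ Set.univ ψ)
    (P : EuclideanSpace ℝ (Fin d) → ℝ) (hP : ∀ x, P x = f x + ψ x)
    (x : EuclideanSpace ℝ (Fin d))
    (η : ℝ) (hη0 : 0 < η) (hηL : η ≤ 1 / (2 * L))
    {Ω : Type*} [MeasureSpace Ω] [IsProbabilityMeasure (volume : Measure Ω)]
    (g : Ω → EuclideanSpace ℝ (Fin d))
    (hgint : Integrable g)
    (hgmean : (∫ ω, g ω) = gradient f x)
    (hgsq : Integrable (fun ω => ‖gradient f x - g ω‖ ^ 2))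
    (yplus Δ : Ω → EuclideanSpace ℝ (Fin d))
    (hyp : ∀ ω, yplus ω = x - η • g ω - η • Δ ω)
    (hΔ : ∀ ω u, ψ (yplus ω) + ⟪Δ ω, u - yplus ω⟫ ≤ ψ u)
    (u : EuclideanSpace ℝ (Fin d)) :
    (∫ ω, P (yplus ω))
      ≤ P u - 1 / η * (∫ ω, ⟪x - yplus ω, u - x⟫)
        + η / 2 * (∫ ω, ‖gradient f x - g ω‖ ^ 2)
        - 1 / (4 * η) * (∫ ω, ‖yplus ω - x‖ ^ 2)
        - max (μ / 2 * ‖u - x‖ ^ 2)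
            (1 / (2 * L * n) * ∑ i, ‖gradient (fi i) u - gradient (fi i) x‖ ^ 2) := by
  have hbreg : ∀ a b, bregmanDiv f a b = 1 / (n : ℝ) * ∑ i, bregmanDiv (fi i) a b :=
    bregmanDiv_eq_smul_sum hdiff hf
  have hfc : Continuous f := by
    rw [funext hf]
    exact continuous_const.mul (continuous_finsetSum _ fun i _ => (hdiff i).continuous)
  have hfx : ∀ z, 0 ≤ bregmanDiv f z x := fun z => by
    rw [hbreg]
    exact mul_nonneg (by positivity)
      (Finset.sum_nonneg fun i _ => bregmanDiv_nonneg (hconv i) (hdiff i) z x)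
  have hdesc : ∀ z, bregmanDiv f z x ≤ L / 2 * ‖z - x‖ ^ 2 := fun z =>
    calc bregmanDiv f z x ≤ 1 / (n : ℝ) * ∑ _i : Fin n, L / 2 * ‖z - x‖ ^ 2 := by
          rw [hbreg]
          gcongr with i
          exact bregmanDiv_le (hdiff i) (hlip i) z x
      _ = L / 2 * ‖z - x‖ ^ 2 := by
          rw [Finset.sum_const, Finset.card_univ, Fintype.card_fin, nsmul_eq_mul]
          field_simp
  have hcoco : 1 / (2 * L * n) * ∑ i, ‖gradient (fi i) u - gradient (fi i) x‖ ^ 2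
      ≤ bregmanDiv f u x :=
    calc _ = 1 / (n : ℝ) * ∑ i, 1 / (2 * L) * ‖gradient (fi i) u - gradient (fi i) x‖ ^ 2 := by
          rw [← Finset.mul_sum]
          ring
      _ ≤ bregmanDiv f u x := by
          rw [hbreg]
          gcongr with i
          exact sq_norm_gradient_sub_le_bregmanDiv (hconv i) (hdiff i) hL (hlip i) u x
  have hmax := max_le (by simpa only [bregmanDiv, sub_nonneg] using hsc u x) hcoco
  have hηL' : 2 * L * η ≤ 1 := by
    rw [le_div_iff₀ (by positivity)] at hηL
    linarith
  have := integral_prox_grad_step_le (μ := volume) hfc hψ hη0 hηL' hfx hdesc hgint hgmean hgsq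
    hyp hΔ u
  simp only [hP]
  linarith

theorem prox_one_step_bound {d n : ℕ} (hn : 0 < n)
    (L μ : ℝ) (hL : 0 < L) (hμ : 0 ≤ μ)
    (fi : Fin n → EuclideanSpace ℝ (Fin d) → ℝ)
    (hconv : ∀ i, ConvexOn ℝ Set.univ (fi i))
    (hdiff : ∀ i, Differentiable ℝ (fi i))
    (hlip : ∀ i x y, ‖gradient (fi i) x - gradient (fi i) y‖ ≤ L * ‖x - y‖)
    (f : EuclideanSpace ℝ (Fin d) → ℝ)
    (hf : ∀ x, f x = (1 / (n : ℝ)) * ∑ i, fi i x)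
    (hsc : ∀ x y, μ / 2 * ‖x - y‖ ^ 2 ≤ f x - f y - ⟪gradient f y, x - y⟫)
    (ψ : EuclideanSpace ℝ (Fin d) → ℝ) (hψ : ConvexOn ℝ Set.univ ψ)
    (P : EuclideanSpace ℝ (Fin d) → ℝ) (hP : ∀ x, P x = f x + ψ x)
    (x : EuclideanSpace ℝ (Fin d))
    (η : ℝ) (hη0 : 0 < η) (hηL : η ≤ 1 / (2 * L))
    {Ω : Type*} [MeasureSpace Ω] [IsProbabilityMeasure (volume : Measure Ω)]
    (g : Ω → EuclideanSpace ℝ (Fin d))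
    (hgint : Integrable g)
    (hgmean : (∫ ω, g ω) = gradient f x)
    (hgsq : Integrable (fun ω => ‖gradient f x - g ω‖ ^ 2))
    (yplus Δ : Ω → EuclideanSpace ℝ (Fin d))
    (hyp : ∀ ω, yplus ω = x - η • g ω - η • Δ ω)
    (hΔ : ∀ ω u, ψ (yplus ω) + ⟪Δ ω, u - yplus ω⟫ ≤ ψ u)
    (u : EuclideanSpace ℝ (Fin d)) :
    (∫ ω, P (yplus ω))
      ≤ P u - 1 / η * (∫ ω, ⟪x - yplus ω, u - x⟫)
        + η / 2 * (∫ ω, ‖gradient f x - g ω‖ ^ 2)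
        - 1 / (4 * η) * (∫ ω, ‖yplus ω - x‖ ^ 2)
        - max (μ / 2 * ‖u - x‖ ^ 2)
            (1 / (2 * L * n) * ∑ i, ‖gradient (fi i) u - gradient (fi i) x‖ ^ 2) :=
  prox_one_step_bound_general hn L μ hL fi hconv hdiff hlip f hf hsc ψ hψ P hP x η hη0 hηL g hgint
    hgmean hgsq yplus Δ hyp hΔ u
end
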